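/- arXiv:2108.09165 — 6 statements merged into one kernel-verified Lean document; each statement's English description precedes it below -/
import Mathlib

section
/- If f is C^1 on the reals with f(0)=0, f'(0)>0, f(u*)=0>f'(u*) for some u*>0, and f(u)/u is strictly decreasing for u>0, then there exists a constant ρ>0 such that f(u) ≥ ρ·min{u, u*−u} for all u in [0,u*]. -/
open Set

theorem stmt_0 (f : ℝ → ℝ) (ustar : ℝ)
    (hf : ContDiff ℝ 1 f)
    (hu : 0 < ustar)
    (hf0 : f 0 = 0)
    (hf'0 : 0 < deriv f 0)
    (hfu : f ustar = 0)
    (hf'u : deriv f ustar < 0)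
    (hmono : StrictAntiOn (fun u => f u / u) (Set.Ioi (0 : ℝ))) :
    ∃ ρ > 0, ∀ u ∈ Set.Icc 0 ustar, f u ≥ ρ * min u (ustar - u) := by
  have hcont : Continuous f := hf.continuous
  have hdiff : DifferentiableAt ℝ f ustar := (hf.differentiable one_ne_zero) ustar
  have hpos : ∀ u, 0 < u → u < ustar → 0 < f u := by
    intro u hu0 huu
    have h := hmono (mem_Ioi.2 hu0) (mem_Ioi.2 hu) huu
    simp only [hfu, zero_div] at h
    have := mul_pos h hu0
    rwa [div_mul_cancel₀ _ (ne_of_gt hu0)] at this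
  set mid := ustar / 2 with hmid
  have hmid0 : 0 < mid := by positivity
  have hmidu : mid < ustar := by rw [hmid]; linarith
  set c1 := f mid / mid with hc1
  have hc1pos : 0 < c1 := div_pos (hpos mid hmid0 hmidu) hmid0
  have left : ∀ u, 0 < u → u ≤ mid → c1 * u ≤ f u := by
    intro u hu0 hum
    have hle : c1 ≤ f u / u := by
      rcases eq_or_lt_of_le hum with h | h
      · rw [h]
      · exact (hmono (mem_Ioi.2 hu0) (mem_Ioi.2 hmid0) h).le
    calc c1 * u ≤ f u / u * u := by nlinarith
      _ = f u := div_mul_cancel₀ _ (ne_of_gt hu0)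
  set H : ℝ → ℝ := fun u => if u = ustar then -deriv f ustar else f u / (ustar - u) with hH
  have hHcont : ContinuousOn H (Icc mid ustar) := by
    intro u huI
    by_cases h : u = ustar
    · rw [h]
      rw [← continuousWithinAt_diff_self]
      have hslope : Filter.Tendsto (fun v => -slope f ustar v) (nhdsWithin ustar {ustar}ᶜ)
          (nhds (-deriv f ustar)) :=
        (hasDerivAt_iff_tendsto_slope.mp hdiff.hasDerivAt).neg
      have hsub : Icc mid ustar \ {ustar} ⊆ ({ustar}ᶜ : Set ℝ) := fun x hx => hx.2
      have htd : Filter.Tendsto H (nhdsWithin ustar (Icc mid ustar \ {ustar}))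
          (nhds (-deriv f ustar)) := by
        refine ((hslope.mono_left (nhdsWithin_mono _ hsub))).congr' ?_
        filter_upwards [self_mem_nhdsWithin] with x hx
        have hxne : x ≠ ustar := hx.2
        rw [hH]
        simp only [if_neg hxne]
        rw [slope_def_field, hfu, sub_zero, show ustar - x = -(x - ustar) by ring, div_neg]
      have hval : H ustar = -deriv f ustar := if_pos rfl
      simpa [ContinuousWithinAt, hval] using htd
    · have hcd : ContinuousAt (fun v => f v / (ustar - v)) u := by
        apply ContinuousAt.div hcont.continuousAt (by fun_prop)
        intro hc
        exact h (by linarith [sub_eq_zero.mp hc])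
      have heq : H =ᶠ[nhds u] fun v => f v / (ustar - v) := by
        filter_upwards [isOpen_ne.mem_nhds h] with x hx
        rw [hH]; simp only [if_neg hx]
      exact (hcd.congr heq.symm).continuousWithinAt
  have hne : (Icc mid ustar).Nonempty := ⟨ustar, hmidu.le, le_rfl⟩
  obtain ⟨x0, hx0I, hx0min⟩ := isCompact_Icc.exists_isMinOn hne hHcont
  set c2 := H x0 with hc2
  have hHpos : ∀ u ∈ Icc mid ustar, 0 < H u := by
    intro u huI
    by_cases h : u = ustar
    · simp only [hH, h, if_true, if_pos rfl]; linarith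
    · have hun : u < ustar := lt_of_le_of_ne huI.2 h
      rw [hH]; simp only [if_neg h]
      exact div_pos (hpos u (lt_of_lt_of_le hmid0 huI.1) hun) (by linarith)
  have hc2pos : 0 < c2 := hHpos x0 hx0I
  refine ⟨min c1 c2, lt_min hc1pos hc2pos, ?_⟩
  intro u ⟨h0, h1⟩
  by_cases hle : u ≤ mid
  · have hmle : min u (ustar - u) = u := min_eq_left (by rw [hmid] at hle; linarith)
    rw [hmle]
    rcases eq_or_lt_of_le h0 with h | h
    · rw [← h, hf0, mul_zero]
    · have h2 := left u h hle
      have h3 : min c1 c2 * u ≤ c1 * u := by nlinarith [min_le_left c1 c2]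
      linarith
  · push_neg at hle
    have hmle : min u (ustar - u) = ustar - u := min_eq_right (by rw [hmid] at hle; linarith)
    rw [hmle]
    rcases eq_or_lt_of_le h1 with h | h
    · rw [h, sub_self, mul_zero, hfu]
    · have hHu : c2 ≤ H u := hx0min ⟨hle.le, h1⟩
      have hHval : H u = f u / (ustar - u) := if_neg (ne_of_lt h)
      have hsubp : 0 < ustar - u := by linarith
      rw [hHval] at hHu
      have h4 : c2 * (ustar - u) ≤ f u :=
        calc c2 * (ustar - u) ≤ f u / (ustar - u) * (ustar - u) := by nlinarith
          _ = f u := div_mul_cancel₀ _ (ne_of_gt hsubp)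
      have := min_le_right c1 c2
      nlinarith
end

section
/- Let J : ℝ → ℝ be nonnegative, even, integrable with ∫_ℝ J = 1, and suppose ς₁|x|^{−γ} ≤ J(x) ≤ ς₂|x|^{−γ} for |x| ≥ R with 1 < γ < 2. Define I(h) = ∫_0^h ∫_h^∞ J(x−y) dy dx for h > 0. Then there exist constants C₁, C₂ > 0 and h₀ > 0 such that C₁·h^{2−γ} ≤ I(h) ≤ C₂·h^{2−γ} for all h ≥ h₀. -/
open Set MeasureTheory

theorem stmt_4 (J : ℝ → ℝ) (ς₁ ς₂ R γ : ℝ)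
    (hJpos : ∀ x, 0 ≤ J x) (hJeven : ∀ x, J (-x) = J x)
    (hJint : Integrable J) (hJint1 : ∫ x, J x = 1)
    (hς₁ : 0 < ς₁) (hς₂ : 0 < ς₂) (hR : 0 < R) (hγ : 1 < γ) (hγ2 : γ < 2)
    (hlow : ∀ x : ℝ, R ≤ |x| → ς₁ * |x| ^ (-γ) ≤ J x)
    (hup : ∀ x : ℝ, R ≤ |x| → J x ≤ ς₂ * |x| ^ (-γ))
    (I : ℝ → ℝ)
    (hI : ∀ h : ℝ, I h = ∫ x in Set.Ioc (0 : ℝ) h, ∫ y in Set.Ioi h, J (x - y)) :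
    ∃ C₁ > 0, ∃ C₂ > 0, ∃ h₀ > 0, ∀ h ≥ h₀,
      C₁ * h ^ (2 - γ) ≤ I h ∧ I h ≤ C₂ * h ^ (2 - γ) := by
  set G : ℝ → ℝ := fun t => ∫ u in Ioi t, J u with hGdef
  have hGnn : ∀ t, 0 ≤ G t := fun t =>
    setIntegral_nonneg measurableSet_Ioi (fun u _ => hJpos u)
  have hGle1 : ∀ t, G t ≤ 1 := by
    intro t
    rw [← hJint1]
    exact setIntegral_le_integral hJint (ae_of_all _ hJpos)
  have hGanti : Antitone G := by
    intro s t hst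
    exact setIntegral_mono_set hJint.integrableOn (ae_of_all _ hJpos)
      (HasSubset.Subset.eventuallyLE (Ioi_subset_Ioi hst))
  have hGint : ∀ a b : ℝ, IntervalIntegrable G volume a b := fun a b =>
    hGanti.intervalIntegrable
  -- inner integral
  have inner : ∀ h x : ℝ, (∫ y in Ioi h, J (x - y)) = G (h - x) := by
    intro h x
    have h1 : ∀ y : ℝ, J (x - y) = J (y - x) := fun y => by
      rw [← hJeven (y - x), neg_sub]
    simp_rw [h1]
    have hmp : MeasurePreserving (· - x) (volume : Measure ℝ) volume :=
      measurePreserving_sub_right volume x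
    have := hmp.setIntegral_preimage_emb
      (MeasurableEquiv.subRight x).measurableEmbedding J (Ioi (h - x))
    have hset : (fun y : ℝ => y - x) ⁻¹' Ioi (h - x) = Ioi h := by
      ext y; simp
    rw [hset] at this
    exact this
  -- I h as interval integral of G
  have hIG : ∀ h : ℝ, 0 ≤ h → I h = ∫ t in (0:ℝ)..h, G t := by
    intro h h0
    rw [hI h]
    simp_rw [inner h]
    rw [← intervalIntegral.integral_of_le h0]
    rw [intervalIntegral.integral_comp_sub_left G h]
    simp
  -- bounds on G for t ≥ R
  have hγ1 : (0:ℝ) < γ - 1 := by linarith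
  have hγ3 : (-1:ℝ) < 1 - γ := by linarith
  have hγ4 : -γ < -1 := by linarith
  have hGub : ∀ t : ℝ, R ≤ t → G t ≤ ς₂ / (γ - 1) * t ^ (1 - γ) := by
    intro t ht
    have ht0 : 0 < t := lt_of_lt_of_le hR ht
    have hle : G t ≤ ∫ u in Ioi t, ς₂ * u ^ (-γ) := by
      apply setIntegral_mono_on hJint.integrableOn
        ((integrableOn_Ioi_rpow_of_lt hγ4 ht0).const_mul ς₂) measurableSet_Ioi
      intro u hu
      have hu0 : 0 < u := lt_trans ht0 hu
      have := hup u (by rw [abs_of_pos hu0]; exact le_of_lt (lt_of_le_of_lt ht hu))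
      rwa [abs_of_pos hu0] at this
    refine hle.trans_eq ?_
    rw [integral_const_mul, integral_Ioi_rpow_of_lt hγ4 ht0]
    rw [show -γ + 1 = 1 - γ by ring]
    field_simp [show (1:ℝ) - γ ≠ 0 by linarith, show γ - 1 ≠ 0 by linarith]
    ring
  have hGlb : ∀ t : ℝ, R ≤ t → ς₁ / (γ - 1) * t ^ (1 - γ) ≤ G t := by
    intro t ht
    have ht0 : 0 < t := lt_of_lt_of_le hR ht
    have hle : (∫ u in Ioi t, ς₁ * u ^ (-γ)) ≤ G t := by
      apply setIntegral_mono_on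
        ((integrableOn_Ioi_rpow_of_lt hγ4 ht0).const_mul ς₁) hJint.integrableOn
        measurableSet_Ioi
      intro u hu
      have hu0 : 0 < u := lt_trans ht0 hu
      have := hlow u (by rw [abs_of_pos hu0]; exact le_of_lt (lt_of_le_of_lt ht hu))
      rwa [abs_of_pos hu0] at this
    refine le_trans (le_of_eq ?_) hle
    rw [integral_const_mul, integral_Ioi_rpow_of_lt hγ4 ht0]
    rw [show -γ + 1 = 1 - γ by ring]
    field_simp [show (1:ℝ) - γ ≠ 0 by linarith, show γ - 1 ≠ 0 by linarith]
    ring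
  -- constants
  have hγ5 : (0:ℝ) < 2 - γ := by linarith
  refine ⟨ς₁ / (2 * (γ - 1)), div_pos hς₁ (by linarith), 
    R / (2 * R) ^ (2 - γ) + ς₂ / ((γ - 1) * (2 - γ)),
    add_pos (div_pos hR (Real.rpow_pos_of_pos (by linarith) _))
      (div_pos hς₂ (mul_pos hγ1 hγ5)),
    2 * R, by positivity, ?_⟩
  intro h hh
  have hR2 : (0:ℝ) < 2 * R := by positivity
  have hRh : R ≤ h := by linarith
  have h0 : 0 < h := lt_of_lt_of_le hR2 hh
  have hIh : I h = ∫ t in (0:ℝ)..h, G t := hIG h h0.le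
  have hsplit : (∫ t in (0:ℝ)..h, G t) =
      (∫ t in (0:ℝ)..R, G t) + ∫ t in R..h, G t :=
    (intervalIntegral.integral_add_adjacent_intervals (hGint 0 R) (hGint R h)).symm
  constructor
  · -- lower bound
    have e1 : (∫ t in (0:ℝ)..h, G t) = (∫ t in (0:ℝ)..(h/2), G t) + ∫ t in (h/2)..h, G t :=
      (intervalIntegral.integral_add_adjacent_intervals (hGint 0 (h/2)) (hGint (h/2) h)).symm
    have e2 : (0:ℝ) ≤ ∫ t in (0:ℝ)..(h/2), G t :=
      intervalIntegral.integral_nonneg (by linarith) (fun u _ => hGnn u)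
    have e3 : (h/2) * G h ≤ ∫ t in (h/2)..h, G t := by
      have : (∫ t in (h/2)..h, G h) ≤ ∫ t in (h/2)..h, G t := by
        apply intervalIntegral.integral_mono_on (by linarith) intervalIntegrable_const
          (hGint _ _)
        intro u hu
        exact hGanti hu.2
      rwa [intervalIntegral.integral_const, smul_eq_mul, show h - h/2 = h/2 by ring] at this
    have e4 : ς₁ / (γ - 1) * h ^ (1 - γ) ≤ G h := hGlb h hRh
    have e5 : h * h ^ (1 - γ) = h ^ (2 - γ) := by
      nth_rewrite 1 [← Real.rpow_one h]
      rw [← Real.rpow_add h0, show (1:ℝ) + (1 - γ) = 2 - γ by ring]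
    calc ς₁ / (2 * (γ - 1)) * h ^ (2 - γ)
        = (h/2) * (ς₁ / (γ - 1) * h ^ (1 - γ)) := by
          rw [← e5]; field_simp [show γ - 1 ≠ 0 by linarith]
      _ ≤ (h/2) * G h := by
          apply mul_le_mul_of_nonneg_left e4 (by linarith)
      _ ≤ ∫ t in (h/2)..h, G t := e3
      _ ≤ ∫ t in (0:ℝ)..h, G t := by rw [e1]; linarith
      _ = I h := hIh.symm
  · -- upper bound
    have u1 : (∫ t in (0:ℝ)..R, G t) ≤ R := by
      have : (∫ t in (0:ℝ)..R, G t) ≤ ∫ t in (0:ℝ)..R, (1:ℝ) := by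
        apply intervalIntegral.integral_mono_on hR.le (hGint _ _)
          intervalIntegrable_const
        intro u _; exact hGle1 u
      simpa using this
    have u2 : (∫ t in R..h, G t) ≤ ς₂ / ((γ - 1) * (2 - γ)) * h ^ (2 - γ) := by
      have step : (∫ t in R..h, G t) ≤ ∫ t in R..h, ς₂ / (γ - 1) * t ^ (1 - γ) := by
        apply intervalIntegral.integral_mono_on hRh (hGint _ _)
          ((intervalIntegral.intervalIntegrable_rpow' hγ3).const_mul _)
        intro u hu
        exact hGub u hu.1
      refine step.trans ?_
      rw [intervalIntegral.integral_const_mul, integral_rpow (Or.inl hγ3)]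
      rw [show 1 - γ + 1 = 2 - γ by ring]
      have hRnn : 0 ≤ R ^ (2 - γ) := Real.rpow_nonneg hR.le _
      have key : ς₂ / (γ - 1) * ((h ^ (2 - γ) - R ^ (2 - γ)) / (2 - γ))
          = ς₂ / ((γ - 1) * (2 - γ)) * (h ^ (2 - γ) - R ^ (2 - γ)) := by
        field_simp [show γ - 1 ≠ 0 by linarith, show (2:ℝ) - γ ≠ 0 by linarith]
      rw [key]
      exact mul_le_mul_of_nonneg_left (by linarith)
        (le_of_lt (div_pos hς₂ (mul_pos hγ1 hγ5)))
    have u3 : R ≤ R / (2 * R) ^ (2 - γ) * h ^ (2 - γ) := by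
      have : (2 * R) ^ (2 - γ) ≤ h ^ (2 - γ) :=
        Real.rpow_le_rpow hR2.le hh (by linarith)
      rw [div_mul_eq_mul_div, le_div_iff₀ (Real.rpow_pos_of_pos hR2 _)]
      nlinarith [Real.rpow_pos_of_pos hR2 (2 - γ)]
    rw [hIh, hsplit]
    have : (R / (2 * R) ^ (2 - γ) + ς₂ / ((γ - 1) * (2 - γ))) * h ^ (2 - γ)
        = R / (2 * R) ^ (2 - γ) * h ^ (2 - γ) + ς₂ / ((γ - 1) * (2 - γ)) * h ^ (2 - γ) := by
      ring
    rw [this]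
    exact add_le_add (u1.trans u3) u2
end

section
/- Let J : ℝ → ℝ be nonnegative, even, integrable with ∫_ℝ J = 1, and suppose ς₁|x|^{−2} ≤ J(x) ≤ ς₂|x|^{−2} for |x| ≥ R. Define I(h) = ∫_0^h ∫_h^∞ J(x−y) dy dx. Then there exist constants C₁, C₂ > 0 and h₀ > 1 such that C₁·ln h ≤ I(h) ≤ C₂·ln h for all h ≥ h₀. -/
open Set MeasureTheory

theorem stmt_5 (J : ℝ → ℝ) (ς₁ ς₂ R : ℝ)
    (hJpos : ∀ x, 0 ≤ J x) (hJeven : ∀ x, J (-x) = J x)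
    (hJint : Integrable J) (hJint1 : ∫ x, J x = 1)
    (hς₁ : 0 < ς₁) (hς₂ : 0 < ς₂) (hR : 0 < R)
    (hlow : ∀ x : ℝ, R ≤ |x| → ς₁ * |x| ^ (-2 : ℝ) ≤ J x)
    (hup : ∀ x : ℝ, R ≤ |x| → J x ≤ ς₂ * |x| ^ (-2 : ℝ))
    (I : ℝ → ℝ)
    (hI : ∀ h : ℝ, I h = ∫ x in Set.Ioc (0 : ℝ) h, ∫ y in Set.Ioi h, J (x - y)) :
    ∃ C₁ > 0, ∃ C₂ > 0, ∃ h₀ > 1, ∀ h ≥ h₀,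
      C₁ * Real.log h ≤ I h ∧ I h ≤ C₂ * Real.log h := by
  set T : ℝ → ℝ := fun t => ∫ z in Ioi t, J z with hTdef
  have hTnonneg : ∀ t, 0 ≤ T t := fun t =>
    setIntegral_nonneg measurableSet_Ioi fun x _ => hJpos x
  have hTle1 : ∀ t, T t ≤ 1 := by
    intro t
    rw [← hJint1]
    exact setIntegral_le_integral hJint (Filter.Eventually.of_forall hJpos)
  have hTanti : Antitone T := by
    intro s t hst
    exact setIntegral_mono_set hJint.integrableOn
      (Filter.Eventually.of_forall hJpos)
      (HasSubset.Subset.eventuallyLE (Ioi_subset_Ioi hst))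
  have hrpow : ∀ t : ℝ, 0 < t → ∫ z in Ioi t, z ^ (-2 : ℝ) = t⁻¹ := by
    intro t ht
    rw [integral_Ioi_rpow_of_lt (by norm_num) ht,
      show (-2 : ℝ) + 1 = -1 by norm_num, Real.rpow_neg_one]
    field_simp
  have hTup : ∀ t : ℝ, R ≤ t → T t ≤ ς₂ / t := by
    intro t ht
    have htpos : 0 < t := lt_of_lt_of_le hR ht
    have h1 : T t ≤ ∫ z in Ioi t, ς₂ * z ^ (-2 : ℝ) := by
      apply setIntegral_mono_on hJint.integrableOn
        ((integrableOn_Ioi_rpow_of_lt (by norm_num) htpos).const_mul ς₂)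
        measurableSet_Ioi
      intro z hz
      have hz' : R ≤ |z| := by
        rw [abs_of_pos (htpos.trans hz)]; exact ht.trans hz.le
      have := hup z hz'
      rwa [abs_of_pos (htpos.trans hz)] at this
    rw [MeasureTheory.integral_const_mul, hrpow t htpos] at h1
    rw [div_eq_mul_inv]; exact h1
  have hTlow : ∀ t : ℝ, R ≤ t → ς₁ / t ≤ T t := by
    intro t ht
    have htpos : 0 < t := lt_of_lt_of_le hR ht
    have h1 : (∫ z in Ioi t, ς₁ * z ^ (-2 : ℝ)) ≤ T t := by
      apply setIntegral_mono_on
        ((integrableOn_Ioi_rpow_of_lt (by norm_num) htpos).const_mul ς₁)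
        hJint.integrableOn measurableSet_Ioi
      intro z hz
      have hz' : R ≤ |z| := by
        rw [abs_of_pos (htpos.trans hz)]; exact ht.trans hz.le
      have := hlow z hz'
      rwa [abs_of_pos (htpos.trans hz)] at this
    rw [MeasureTheory.integral_const_mul, hrpow t htpos] at h1
    rw [div_eq_mul_inv]; exact h1
  -- inner integral
  have hinner : ∀ h x : ℝ, (∫ y in Ioi h, J (x - y)) = T (h - x) := by
    intro h x
    have hemb : MeasurableEmbedding (fun t : ℝ => x - t) :=
      (Homeomorph.subLeft x).measurableEmbedding
    have hmp : MeasurePreserving (fun t : ℝ => x - t) volume volume :=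
      Measure.measurePreserving_sub_left volume x
    have h1 := hmp.setIntegral_preimage_emb hemb (fun y => J (x - y)) (Ioi h)
    have hpre : (fun t : ℝ => x - t) ⁻¹' Ioi h = Iio (x - h) := by
      ext t
      simp only [mem_preimage, mem_Ioi, mem_Iio]
      constructor <;> intro H <;> linarith
    rw [hpre] at h1
    have h2 : (∫ t in Iio (x - h), J (x - (x - t))) = ∫ t in Iio (x - h), J t := by
      apply setIntegral_congr_fun measurableSet_Iio
      intro t _
      norm_num
    have h3 : T (h - x) = ∫ t in Iio (x - h), J t := by
      have h4 := integral_comp_neg_Ioi (h - x) J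
      have h5 : (∫ u in Ioi (h - x), J (-u)) = T (h - x) := by
        apply setIntegral_congr_fun measurableSet_Ioi
        intro u _
        exact hJeven u
      rw [h5, show -(h - x) = x - h by ring] at h4
      rw [h4, integral_Iic_eq_integral_Iio]
    rw [← h1, h2, h3]
  have hTii : ∀ a b : ℝ, IntervalIntegrable T volume a b := fun a b =>
    hTanti.intervalIntegrable
  have hIeq : ∀ h : ℝ, 0 ≤ h → I h = ∫ x in (0:ℝ)..h, T x := by
    intro h hh
    rw [hI h]
    have : (∫ x in Ioc (0:ℝ) h, ∫ y in Ioi h, J (x - y)) =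
        ∫ x in Ioc (0:ℝ) h, T (h - x) := by
      apply setIntegral_congr_fun measurableSet_Ioc
      intro x _
      exact hinner h x
    rw [this, ← intervalIntegral.integral_of_le hh,
      intervalIntegral.integral_comp_sub_left T h]
    norm_num
  -- choose constants
  refine ⟨ς₁ / 2, by positivity, R + ς₂ + ς₂ * |Real.log R|, by positivity,
    max (Real.exp 1) (R ^ 2 + R + 1), ?_, ?_⟩
  · exact lt_of_lt_of_le (by simpa using Real.one_lt_exp_iff_of_nonneg le_rfl |>.mpr one_pos) (le_max_left _ _)
  intro h hh
  have hhe : Real.exp 1 ≤ h := le_trans (le_max_left _ _) hh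
  have hhR2 : R ^ 2 + R + 1 ≤ h := le_trans (le_max_right _ _) hh
  have hRh : R ≤ h := by nlinarith
  have hhpos : 0 < h := lt_of_lt_of_le (Real.exp_pos 1) hhe
  have hlog1 : 1 ≤ Real.log h := by
    rw [← Real.log_exp 1]
    exact Real.log_le_log (Real.exp_pos 1) hhe
  have hlogR2 : 2 * Real.log R ≤ Real.log h := by
    have : Real.log (R ^ 2) ≤ Real.log h := by
      apply Real.log_le_log (by positivity)
      nlinarith
    rwa [Real.log_pow] at this
    
  -- split integral
  have hsplit : (∫ x in (0:ℝ)..h, T x) =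
      (∫ x in (0:ℝ)..R, T x) + ∫ x in R..h, T x :=
    (intervalIntegral.integral_add_adjacent_intervals (hTii 0 R) (hTii R h)).symm
  have h0R_nonneg : 0 ≤ ∫ x in (0:ℝ)..R, T x :=
    intervalIntegral.integral_nonneg hR.le fun x _ => hTnonneg x
  have h0R_le : (∫ x in (0:ℝ)..R, T x) ≤ R := by
    have := intervalIntegral.integral_mono_on hR.le (hTii 0 R)
      intervalIntegrable_const (fun x _ => hTle1 x)
    simpa using this
  have hRzero : (0:ℝ) ∉ Set.uIcc R h := by
    rw [Set.uIcc_of_le hRh]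
    intro hmem
    exact absurd hmem.1 (not_le.mpr hR)
  have hii1 : IntervalIntegrable (fun t : ℝ => 1 / t) volume R h := by
    apply intervalIntegral.intervalIntegrable_one_div (f := fun x : ℝ => x)
    · intro x hx
      intro h0
      exact hRzero (h0 ▸ hx)
    · exact continuousOn_id
  have hlogdiv : (∫ t in R..h, 1 / t) = Real.log h - Real.log R := by
    rw [integral_one_div hRzero, Real.log_div (by positivity) (by positivity)]
  constructor
  · -- lower bound
    have hRh_low : ς₁ * (Real.log h - Real.log R) ≤ ∫ x in R..h, T x := by
      have hmono : (∫ t in R..h, ς₁ * (1 / t)) ≤ ∫ x in R..h, T x := by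
        apply intervalIntegral.integral_mono_on hRh (hii1.const_mul ς₁) (hTii R h)
        intro x hx
        have hx1 : R ≤ x := hx.1
        have hxpos : 0 < x := lt_of_lt_of_le hR hx1
        have := hTlow x hx1
        rw [mul_one_div]
        rw [div_eq_mul_inv] at this ⊢
        rwa [← div_eq_mul_inv] at this ⊢
      rwa [intervalIntegral.integral_const_mul, hlogdiv] at hmono
    have hkey : ς₁ / 2 * Real.log h ≤ ς₁ * (Real.log h - Real.log R) := by
      nlinarith
    rw [hIeq h hhpos.le, hsplit]
    nlinarith
  · -- upper bound
    have hRh_up : (∫ x in R..h, T x) ≤ ς₂ * (Real.log h - Real.log R) := by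
      have hmono : (∫ x in R..h, T x) ≤ ∫ t in R..h, ς₂ * (1 / t) := by
        apply intervalIntegral.integral_mono_on hRh (hTii R h) (hii1.const_mul ς₂)
        intro x hx
        have hx1 : R ≤ x := hx.1
        have := hTup x hx1
        rw [mul_one_div]
        exact this
      rwa [intervalIntegral.integral_const_mul, hlogdiv] at hmono
    have habs : -Real.log R ≤ |Real.log R| := neg_le_abs _
    rw [hIeq h hhpos.le, hsplit]
    have h1 : (∫ x in (0:ℝ)..R, T x) + ∫ x in R..h, T x ≤
        R + ς₂ * Real.log h + ς₂ * |Real.log R| := by nlinarith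
    have h2 : R + ς₂ * Real.log h + ς₂ * |Real.log R| ≤
        (R + ς₂ + ς₂ * |Real.log R|) * Real.log h := by nlinarith [abs_nonneg (Real.log R), mul_le_mul_of_nonneg_left hlog1 hR.le, mul_le_mul_of_nonneg_left hlog1 (mul_nonneg hς₂.le (abs_nonneg (Real.log R)))]
    linarith
end

section
/- Let h : [0,∞) → ℝ be C^1 with h nondecreasing, h(t) ≥ e for t ≥ T, and suppose there is M > 0 such that h'(t) ≤ M·ln(h(t)) for all t ≥ T. Then there exists C > 0 such that h(t) ≤ C·t·ln t for all sufficiently large t. -/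
open Set Filter

private lemma mvt_aux (h : ℝ → ℝ) (hd : Differentiable ℝ h) (a b C : ℝ) (hab : a ≤ b)
    (hC : ∀ s ∈ Set.Icc a b, deriv h s ≤ C) : h b - h a ≤ C * (b - a) := by
  set g : ℝ → ℝ := fun s => C * s - h s with hg
  have hgd : Differentiable ℝ g := (differentiable_const C |>.mul differentiable_id).sub hd
  have hderiv : ∀ s, deriv g s = C - deriv h s := by
    intro s
    have h1 : HasDerivAt g (C - deriv h s) s := by
      have h2 := ((hasDerivAt_id s).const_mul C).sub (hd s).hasDerivAt
      simp only [id, mul_one] at h2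
      exact h2
    exact h1.deriv
  have hmono : MonotoneOn g (Set.Icc a b) := by
    apply monotoneOn_of_deriv_nonneg (convex_Icc a b) hgd.continuous.continuousOn
      (hgd.differentiableOn)
    intro x hx
    rw [hderiv]
    have hx' : x ∈ Set.Icc a b := interior_subset hx
    linarith [hC x hx']
  have := hmono (Set.left_mem_Icc.2 hab) (Set.right_mem_Icc.2 hab) hab
  simp only [hg] at this
  linarith

private lemma log_le_half (x : ℝ) (hx : 0 < x) : Real.log x ≤ x / 2 := by
  have h1 : Real.log x = 2 * Real.log (Real.sqrt x) := by
    conv_lhs => rw [show x = Real.sqrt x ^ 2 from (Real.sq_sqrt hx.le).symm]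
    rw [Real.log_pow]; push_cast; ring
  have h2 : Real.log (Real.sqrt x) ≤ Real.sqrt x - 1 :=
    Real.log_le_sub_one_of_pos (Real.sqrt_pos.2 hx)
  have h3 : (Real.sqrt x - 2)^2 ≥ 0 := sq_nonneg _
  have h4 : Real.sqrt x ^ 2 = x := Real.sq_sqrt hx.le
  nlinarith

theorem stmt_7 (h : ℝ → ℝ) (M T : ℝ)
    (hsmooth : ContDiff ℝ 1 h)
    (hmono : MonotoneOn h (Set.Ici (0 : ℝ)))
    (hT : 0 ≤ T) (hM : 0 < M)
    (hge : ∀ t ≥ T, Real.exp 1 ≤ h t)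
    (hineq : ∀ t ≥ T, deriv h t ≤ M * Real.log (h t)) :
    ∃ C > 0, ∀ᶠ t in atTop, h t ≤ C * t * Real.log t := by
  have hd : Differentiable ℝ h := hsmooth.differentiable one_ne_zero
  set K := h T with hK
  have hKe : Real.exp 1 ≤ K := hge T le_rfl
  have he1 : (1:ℝ) ≤ Real.exp 1 := by
    have := Real.add_one_le_exp (1:ℝ); linarith
  have hK0 : 0 < K := lt_of_lt_of_le (by linarith) hKe
  have hKM : 0 < Real.log (K + M) := by
    apply Real.log_pos; nlinarith
  refine ⟨2 * (K + M) * (Real.log (K + M) + 1), by positivity, ?_⟩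
  rw [eventually_atTop]
  refine ⟨max T (Real.exp 1), fun t ht => ?_⟩
  have htT : T ≤ t := le_trans (le_max_left _ _) ht
  have hte : Real.exp 1 ≤ t := le_trans (le_max_right _ _) ht
  have ht0 : 0 < t := by linarith
  have hht : Real.exp 1 ≤ h t := hge t htT
  have hht0 : 0 < h t := by linarith
  set L := Real.log (h t) with hL
  have hL1 : 1 ≤ L := by
    calc (1:ℝ) = Real.log (Real.exp 1) := (Real.log_exp 1).symm
    _ ≤ L := Real.log_le_log (Real.exp_pos 1) hht
  -- Step A: h t ≤ (K + M*t) * L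
  have stepA : h t ≤ (K + M * t) * L := by
    have hbound : ∀ s ∈ Set.Icc T t, deriv h s ≤ M * L := by
      intro s hs
      have hs1 : T ≤ s := hs.1
      have hhs : h s ≤ h t := hmono (by simp [Set.mem_Ici]; linarith) (by simp [Set.mem_Ici]; linarith) hs.2
      have hhse : Real.exp 1 ≤ h s := hge s hs1
      have : Real.log (h s) ≤ L := Real.log_le_log (by linarith) hhs
      calc deriv h s ≤ M * Real.log (h s) := hineq s hs1
        _ ≤ M * L := by nlinarith
    have := mvt_aux h hd T t (M * L) htT hbound
    have hML : 0 ≤ M * L := by nlinarith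
    nlinarith [hML, htT, hT]
  -- Step B: L ≤ 2 * log (K + M*t)
  have hKMt : Real.exp 1 ≤ K + M * t := by nlinarith
  have hKMt0 : 0 < K + M * t := by linarith [Real.exp_pos 1]
  have stepB : L ≤ 2 * Real.log (K + M * t) := by
    have h1 : L ≤ Real.log ((K + M * t) * L) := Real.log_le_log hht0 stepA
    rw [Real.log_mul (by positivity) (by linarith)] at h1
    have h2 : Real.log L ≤ L / 2 := log_le_half L (by linarith)
    linarith
  -- Step C: combine
  have hKMt2 : K + M * t ≤ (K + M) * t := by
    have : 1 ≤ t := by linarith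
    nlinarith
  have hlogt : 1 ≤ Real.log t := by
    calc (1:ℝ) = Real.log (Real.exp 1) := (Real.log_exp 1).symm
    _ ≤ Real.log t := Real.log_le_log (Real.exp_pos 1) hte
  have h5 : Real.log (K + M * t) ≤ Real.log (K + M) + Real.log t := by
    calc Real.log (K + M * t) ≤ Real.log ((K + M) * t) := Real.log_le_log hKMt0 hKMt2
    _ = Real.log (K + M) + Real.log t := Real.log_mul (by positivity) (by linarith)
  have h6 : Real.log (K + M) + Real.log t ≤ (Real.log (K + M) + 1) * Real.log t := by
    nlinarith
  calc h t ≤ (K + M * t) * L := stepA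
    _ ≤ (K + M * t) * (2 * Real.log (K + M * t)) := by nlinarith [stepB]
    _ ≤ ((K + M) * t) * (2 * ((Real.log (K + M) + 1) * Real.log t)) := by
        have hl0 : 0 < Real.log (K + M * t) := by
          calc (0:ℝ) < 1 := one_pos
          _ = Real.log (Real.exp 1) := (Real.log_exp 1).symm
          _ ≤ Real.log (K + M * t) := Real.log_le_log (Real.exp_pos 1) hKMt
        have hr : Real.log (K + M * t) ≤ (Real.log (K + M) + 1) * Real.log t := le_trans h5 h6
        have hl : 0 < (K + M) * t := by positivity
        nlinarith
    _ = 2 * (K + M) * (Real.log (K + M) + 1) * t * Real.log t := by ring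
end

section
/- Let f be C^2 on [0, 2u*] with f(u*) = 0 and f'(u*) < 0, and let C = max_{u ∈ [0,2u*]} |f''(u)|. Then for all ε ∈ (0,1] and all u ∈ [0,u*]: (1+ε)f(u) − f((1+ε)u) ≥ −ε·u*·f'(u*) − C·ε²·(u*)² − (1+ε)·C·ε·u*·(u*−u). -/
open Set

theorem stmt_8 (f : ℝ → ℝ) (ustar C : ℝ)
    (hu : 0 < ustar)
    (hf : ContDiffOn ℝ 2 f (Set.Icc 0 (2 * ustar)))
    (hfu : f ustar = 0) (hf'u : deriv f ustar < 0)
    (hC : ∀ u ∈ Set.Icc (0 : ℝ) (2 * ustar), |iteratedDeriv 2 f u| ≤ C) :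
    ∀ ε ∈ Set.Ioc (0 : ℝ) 1, ∀ u ∈ Set.Icc (0 : ℝ) ustar,
      (1 + ε) * f u - f ((1 + ε) * u) ≥
        -ε * ustar * deriv f ustar - C * ε ^ 2 * ustar ^ 2
          - (1 + ε) * C * ε * ustar * (ustar - u) := by
  intro ε hε u huu
  obtain ⟨hε0, hε1⟩ := hε
  obtain ⟨hu0, hu1⟩ := huu
  set s : Set ℝ := Set.Ioo 0 (2 * ustar) with hs_def
  have hsopen : IsOpen s := isOpen_Ioo
  have hsconv : Convex ℝ s := convex_Ioo _ _
  have hsub : s ⊆ Set.Icc 0 (2 * ustar) := Set.Ioo_subset_Icc_self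
  have hC0 : 0 ≤ C := le_trans (abs_nonneg _) (hC 0 ⟨le_refl _, by linarith⟩)
  -- f is C² on the open interval
  have hfs : ContDiffOn ℝ 2 f s := hf.mono hsub
  have h2 : (2 : WithTop ℕ∞) = 1 + 1 := by norm_num
  rw [h2, contDiffOn_succ_iff_deriv_of_isOpen hsopen] at hfs
  have hdf : ∀ x ∈ s, DifferentiableAt ℝ f x := fun x hx =>
    hfs.1.differentiableAt (hsopen.mem_nhds hx)
  have hdf' : ∀ x ∈ s, DifferentiableAt ℝ (deriv f) x := fun x hx =>
    (hfs.2.2.differentiableOn one_ne_zero).differentiableAt (hsopen.mem_nhds hx)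
  have hbound : ∀ x ∈ s, ‖deriv (deriv f) x‖ ≤ C := by
    intro x hx
    have := hC x (hsub hx)
    rw [iteratedDeriv_succ, iteratedDeriv_one] at this
    rw [Real.norm_eq_abs]
    exact this
  have hLip : ∀ x ∈ s, ∀ y ∈ s, |deriv f y - deriv f x| ≤ C * |y - x| := by
    intro x hx y hy
    have := hsconv.norm_image_sub_le_of_norm_deriv_le hdf' hbound hx hy
    rwa [Real.norm_eq_abs, Real.norm_eq_abs] at this
  have hust : ustar ∈ s := ⟨hu, by linarith⟩
  -- P2 : f u ≥ f'(u*)(u - u*) - C (u* - u)^2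
  have P2 : f u ≥ deriv f ustar * (u - ustar) - C * (ustar - u) ^ 2 := by
    rcases eq_or_lt_of_le hu1 with h | h
    · rw [h, hfu]; nlinarith
    · have hcont : ContinuousOn f (Set.Icc u ustar) :=
        hf.continuousOn.mono (Set.Icc_subset_Icc hu0 (by linarith))
      have hderiv : ∀ x ∈ Set.Ioo u ustar, HasDerivAt f (deriv f x) x := by
        intro x hx
        exact (hdf x ⟨lt_of_le_of_lt hu0 hx.1, by linarith [hx.2]⟩).hasDerivAt
      obtain ⟨c, hc, hc'⟩ := exists_hasDerivAt_eq_slope f (deriv f) h hcont hderiv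
      have hcs : c ∈ s := ⟨lt_of_le_of_lt hu0 hc.1, by linarith [hc.2]⟩
      have hlc : |deriv f c - deriv f ustar| ≤ C * |c - ustar| :=
        hLip ustar hust c hcs
      have habs : |c - ustar| = ustar - c := by
        rw [abs_of_nonpos (by linarith [hc.2])]; ring
      rw [habs] at hlc
      have h1 : deriv f c ≤ deriv f ustar + C * (ustar - c) := by
        have := abs_le.mp hlc
        linarith [this.2]
      have heq : f ustar - f u = deriv f c * (ustar - u) := by
        rw [eq_div_iff (by linarith : ustar - u ≠ 0)] at hc'
        exact hc'.symm
      rw [hfu] at heq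
      have hzu : (0:ℝ) ≤ ustar - u := by linarith
      have k1 : deriv f c * (ustar - u) ≤ (deriv f ustar + C * (ustar - c)) * (ustar - u) :=
        mul_le_mul_of_nonneg_right h1 hzu
      have k2 : C * (ustar - c) * (ustar - u) ≤ C * (ustar - u) * (ustar - u) :=
        mul_le_mul_of_nonneg_right
          (mul_le_mul_of_nonneg_left (by linarith [hc.1] : ustar - c ≤ ustar - u) hC0) hzu
      nlinarith [k1, k2, heq]
  -- P1 : f((1+ε)u) - f u ≤ ε u f'(u*) + C ε u (u*-u) + C ε² u²
  have P1 : f ((1 + ε) * u) - f u ≤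
      ε * u * deriv f ustar + C * ε * u * (ustar - u) + C * ε ^ 2 * u ^ 2 := by
    rcases eq_or_lt_of_le hu0 with h | h
    · rw [← h]; simp
    · have hab : u < (1 + ε) * u := by nlinarith
      have hb2 : (1 + ε) * u ≤ 2 * ustar := by nlinarith
      have hcont : ContinuousOn f (Set.Icc u ((1 + ε) * u)) :=
        hf.continuousOn.mono (Set.Icc_subset_Icc hu0 hb2)
      have hderiv : ∀ x ∈ Set.Ioo u ((1 + ε) * u), HasDerivAt f (deriv f x) x := by
        intro x hx
        exact (hdf x ⟨lt_trans h hx.1, lt_of_lt_of_le hx.2 hb2⟩).hasDerivAt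
      obtain ⟨c, hc, hc'⟩ := exists_hasDerivAt_eq_slope f (deriv f) hab hcont hderiv
      have hcs : c ∈ s := ⟨lt_trans h hc.1, lt_of_lt_of_le hc.2 hb2⟩
      have hus : u ∈ s := ⟨h, by linarith⟩
      have hl1 : |deriv f c - deriv f u| ≤ C * |c - u| := hLip u hus c hcs
      have hl2 : |deriv f u - deriv f ustar| ≤ C * |u - ustar| := hLip ustar hust u hus
      have habs1 : |c - u| = c - u := abs_of_nonneg (by linarith [hc.1])
      have habs2 : |u - ustar| = ustar - u := by
        rw [abs_of_nonpos (by linarith)]; ring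
      rw [habs1] at hl1
      rw [habs2] at hl2
      have h1 : deriv f c ≤ deriv f u + C * (c - u) := by linarith [(abs_le.mp hl1).2]
      have h2' : deriv f u ≤ deriv f ustar + C * (ustar - u) := by linarith [(abs_le.mp hl2).2]
      have heq : f ((1 + ε) * u) - f u = deriv f c * (ε * u) := by
        rw [eq_div_iff (by nlinarith : (1 + ε) * u - u ≠ 0)] at hc'
        rw [← hc']; ring
      have hcu : c - u ≤ ε * u := by nlinarith [hc.2]
      nlinarith [mul_nonneg hε0.le h.le, mul_nonneg hC0 (mul_nonneg hε0.le h.le)]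
  have hzu : (0:ℝ) ≤ ustar - u := by linarith
  have hεP2 : ε * (deriv f ustar * (u - ustar) - C * (ustar - u) ^ 2) ≤ ε * f u :=
    mul_le_mul_of_nonneg_left P2 hε0.le
  have hA : 0 ≤ C * ε ^ 2 * (ustar ^ 2 - u ^ 2) :=
    mul_nonneg (mul_nonneg hC0 (sq_nonneg ε)) (by nlinarith)
  have hB : 0 ≤ C * ε ^ 2 * (ustar * (ustar - u)) :=
    mul_nonneg (mul_nonneg hC0 (sq_nonneg ε)) (mul_nonneg hu.le hzu)
  nlinarith [P1, hεP2, hA, hB]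
end

section
/- Let φ_∞ : (−∞,0] → [0,u*] be nonincreasing and satisfy, at every point of continuity, the equation d·∫_{−∞}^{0} J(x−y)·φ_∞(y) dy − d·φ_∞(x) + f(φ_∞(x)) = 0 for x ∈ (−∞,0), where J is continuous, nonnegative, even, J(0) > 0, ∫J = 1, d > 0, f continuous, f(0)=0. Define x* = sup{x < 0 : φ_∞ is continuous at x and φ_∞(x) > 0}, assuming this set is nonempty. Then x* = 0. -/
open Set MeasureTheory

theorem stmt_10 (J f φ_inf : ℝ → ℝ) (d ustar : ℝ)
    (hJcont : Continuous J) (hJbdd : ∃ M, ∀ x, J x ≤ M)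
    (hJpos : ∀ x, 0 ≤ J x) (hJ0 : 0 < J 0)
    (hJint : ∫ x, J x = 1) (hJeven : ∀ x, J (-x) = J x)
    (hd : 0 < d) (hfcont : Continuous f) (hf0 : f 0 = 0)
    (hu : 0 < ustar)
    (hmono : AntitoneOn φ_inf (Set.Iic (0 : ℝ)))
    (hbdd : ∀ x ∈ Set.Iic (0 : ℝ), φ_inf x ∈ Set.Icc 0 ustar)
    (heq : ∀ x < (0 : ℝ), ContinuousAt φ_inf x →
      d * (∫ y in Set.Iic (0 : ℝ), J (x - y) * φ_inf y) - d * φ_inf x + f (φ_inf x) = 0)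
    (hne : {x : ℝ | x < 0 ∧ ContinuousAt φ_inf x ∧ 0 < φ_inf x}.Nonempty) :
    sSup {x : ℝ | x < 0 ∧ ContinuousAt φ_inf x ∧ 0 < φ_inf x} = 0 := by
  set S := {x : ℝ | x < 0 ∧ ContinuousAt φ_inf x ∧ 0 < φ_inf x} with hSdef
  have hbddS : BddAbove S := ⟨0, fun x hx => le_of_lt hx.1⟩
  have hle : sSup S ≤ 0 := csSup_le hne fun x hx => le_of_lt hx.1
  by_contra hne0
  have hlt : sSup S < 0 := lt_of_le_of_ne hle hne0
  set xs := sSup S with hxs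
  -- the monotone modification
  set ψ : ℝ → ℝ := fun x => φ_inf (min x 0) with hψdef
  have hψeq : ∀ y : ℝ, y ≤ 0 → ψ y = φ_inf y := by
    intro y hy; simp [hψdef, min_eq_left hy]
  have hψanti : Antitone ψ := by
    intro a b hab
    exact hmono (min_le_right a 0) (min_le_right b 0) (min_le_min hab le_rfl)
  -- continuity points are dense in (−∞,0)
  have hD : {x : ℝ | ¬ ContinuousAt ψ x}.Countable := hψanti.countable_not_continuousAt
  have key : ∀ a b : ℝ, a < b → ∃ x ∈ Set.Ioo a b, ContinuousAt ψ x := by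
    intro a b hab
    by_contra h
    push_neg at h
    have hsub : Set.Ioo a b ⊆ {x : ℝ | ¬ ContinuousAt ψ x} := fun x hx => h x hx
    have h1 : volume (Set.Ioo a b) ≤ 0 := by
      calc volume (Set.Ioo a b) ≤ volume {x : ℝ | ¬ ContinuousAt ψ x} := measure_mono hsub
        _ = 0 := hD.measure_zero volume
    rw [Real.volume_Ioo] at h1
    have : (0:ℝ) < b - a := by linarith
    exact (ENNReal.ofReal_pos.2 this).ne' (le_antisymm h1 zero_le)
  -- continuity of ψ gives continuity of φ_inf on (−∞,0)
  have hcongr : ∀ x : ℝ, x < 0 → ContinuousAt ψ x → ContinuousAt φ_inf x := by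
    intro x hx hc
    have hev : ψ =ᶠ[nhds x] φ_inf := by
      filter_upwards [Iio_mem_nhds hx] with y hy
      exact hψeq y (le_of_lt hy)
    exact hc.congr hev
  -- ε from continuity of J at 0
  obtain ⟨ε, hε, hball⟩ := Metric.continuousAt_iff.mp (hJcont.continuousAt (x := (0:ℝ))) (J 0 / 2)
    (by positivity)
  have hJlow : ∀ t : ℝ, |t| < ε → J 0 / 2 < J t := by
    intro t ht
    have := hball (by simpa [Real.dist_eq, sub_zero] using ht)
    rw [Real.dist_eq, abs_sub_lt_iff] at this
    linarith [this.2]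
  -- pick x0 ∈ S close to xs
  obtain ⟨x0, hx0S, hx0gt⟩ := exists_lt_of_lt_csSup hne (show xs - ε/2 < xs by linarith)
  have hx0le : x0 ≤ xs := le_csSup hbddS hx0S
  obtain ⟨hx0neg, hx0cont, hx0pos⟩ := hx0S
  -- pick a continuity point x1 ∈ (xs, min (xs+ε/2) 0)
  have hb : xs < min (xs + ε/2) 0 := lt_min (by linarith) hlt
  obtain ⟨x1, hx1mem, hx1ψ⟩ := key xs (min (xs + ε/2) 0) hb
  have hx1neg : x1 < 0 := lt_of_lt_of_le hx1mem.2 (min_le_right _ _)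
  have hx1lt : x1 < xs + ε/2 := lt_of_lt_of_le hx1mem.2 (min_le_left _ _)
  have hx1gt : xs < x1 := hx1mem.1
  have hx1cont : ContinuousAt φ_inf x1 := hcongr x1 hx1neg hx1ψ
  -- φ_inf x1 = 0
  have hφx1 : φ_inf x1 = 0 := by
    rcases lt_or_eq_of_le (hbdd x1 (le_of_lt hx1neg)).1 with h | h
    · exfalso
      have : x1 ∈ S := ⟨hx1neg, hx1cont, h⟩
      exact absurd (le_csSup hbddS this) (not_le.mpr hx1gt)
    · exact h.symm
  -- the equation at x1 gives: the integral is 0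
  have heq1 := heq x1 hx1neg hx1cont
  rw [hφx1, hf0] at heq1
  have hI0 : (∫ y in Set.Iic (0 : ℝ), J (x1 - y) * φ_inf y) = 0 := by
    have : d * (∫ y in Set.Iic (0 : ℝ), J (x1 - y) * φ_inf y) = 0 := by linarith
    exact (mul_eq_zero.mp this).resolve_left (ne_of_gt hd)
  -- J is integrable
  have hJInt : Integrable J := by
    by_contra h
    rw [integral_undef h] at hJint
    norm_num at hJint
  have hJx1 : Integrable (fun y => J (x1 - y)) := hJInt.comp_sub_left x1
  -- the integrand with ψ
  set g : ℝ → ℝ := fun y => J (x1 - y) * ψ y with hgdef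
  have hgmeas : Measurable g :=
    (hJcont.measurable.comp (measurable_const.sub measurable_id)).mul hψanti.measurable
  have hgint : IntegrableOn g (Set.Iic (0:ℝ)) := by
    refine Integrable.mono' ((hJx1.restrict (s := Set.Iic (0:ℝ))).const_mul ustar)
      hgmeas.aestronglyMeasurable ?_
    refine (ae_restrict_iff' measurableSet_Iic).2 (ae_of_all _ fun y hy => ?_)
    have hb1 := hbdd y hy
    have hψy : ψ y = φ_inf y := hψeq y hy
    rw [hgdef]
    simp only [hψy]
    rw [Real.norm_eq_abs, abs_of_nonneg (mul_nonneg (hJpos _) hb1.1), mul_comm ustar]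
    exact mul_le_mul_of_nonneg_left hb1.2 (hJpos _)
  have hIg : (∫ y in Set.Iic (0:ℝ), J (x1 - y) * φ_inf y) = ∫ y in Set.Iic (0:ℝ), g y := by
    refine setIntegral_congr_fun measurableSet_Iic fun y hy => ?_
    simp [hgdef, hψeq y hy]
  -- lower bound: the integral is positive
  set η := ε - (x1 - x0) with hηdef
  have hηpos : 0 < η := by
    have : x1 - x0 < ε := by linarith
    linarith
  set T := Set.Ioc (x0 - η) x0 with hTdef
  have hTsub : T ⊆ Set.Iic (0:ℝ) := fun y hy => le_trans hy.2 (le_of_lt hx0neg)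
  have hx0lt : x0 < x1 := lt_of_le_of_lt hx0le hx1gt
  have hglow : ∀ y ∈ T, J 0 / 2 * φ_inf x0 ≤ g y := by
    intro y hy
    have hy0 : y ≤ 0 := hTsub hy
    have hJy : J 0 / 2 < J (x1 - y) := by
      apply hJlow
      rw [abs_of_pos (by linarith [hy.2] : (0:ℝ) < x1 - y)]
      have := hy.1
      linarith
    have hφy : φ_inf x0 ≤ φ_inf y := hmono hy0 (le_of_lt hx0neg) hy.2
    rw [hgdef]
    simp only [hψeq y hy0]
    calc J 0 / 2 * φ_inf x0 ≤ J (x1 - y) * φ_inf x0 :=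
          mul_le_mul_of_nonneg_right (le_of_lt hJy) (le_of_lt hx0pos)
      _ ≤ J (x1 - y) * φ_inf y := mul_le_mul_of_nonneg_left hφy (hJpos _)
  have hgnonneg : 0 ≤ᵐ[volume.restrict (Set.Iic (0:ℝ))] g := by
    refine (ae_restrict_iff' measurableSet_Iic).2 (ae_of_all _ fun y hy => ?_)
    rw [hgdef]
    simp only [hψeq y hy]
    exact mul_nonneg (hJpos _) (hbdd y hy).1
  have hTvol : (volume T).toReal = η := by
    rw [hTdef, Real.volume_Ioc]
    rw [ENNReal.toReal_ofReal (by linarith)]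
    ring
  have h1 : J 0 / 2 * φ_inf x0 * η ≤ ∫ y in T, g y := by
    have := setIntegral_ge_of_const_le_real (μ := volume) measurableSet_Ioc
      measure_Ioc_lt_top.ne hglow (hgint.mono_set hTsub)
    rwa [show volume.real (Set.Ioc (x0 - η) x0) = η from hTvol] at this
  have h2 : (∫ y in T, g y) ≤ ∫ y in Set.Iic (0:ℝ), g y :=
    setIntegral_mono_set hgint hgnonneg (HasSubset.Subset.eventuallyLE hTsub)
  have hpos : 0 < J 0 / 2 * φ_inf x0 * η := by positivity
  rw [hIg] at hI0
  linarith
end
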